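/- arXiv:1912.07021 — 5 statements merged into one kernel-verified Lean document; each statement's English description precedes it below -/
import Mathlib

section
/- Let G, H be real Hilbert spaces, L, C : G → H bounded linear operators, x* a unit vector and λ* ∈ ℝ such that, setting A = L - λ*C: Ker A = ℝ·x*, C x* ≠ 0, and Im A ⊕ ℝ·(C x*) = H. Define Ψ on the unit sphere S of G times ℝ by Ψ(x, λ) = L x - λ C x. Then the differential of Ψ at (x*, λ*), namely the linear map (ẋ, λ̇) ↦ (L - λ*C)ẋ - λ̇·C x* defined on the tangent space (ℝx*)^⊥ × ℝ, is a bijective bounded linear operator onto H. -/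
/-!
`(ℝ x*)ᗮ` is a complement of `Ker A = ℝ x*`, so `A` maps it isomorphically onto `Im A`, and
`t ↦ t • C x*` maps `ℝ` isomorphically onto the complementary line `ℝ (C x*)`. The differential is
the sum of these two isomorphisms composed with `Im A × ℝ (C x*) ≃ H`.
-/

open Submodule LinearMap

section

variable {K E F : Type*} [Field K] [AddCommGroup E] [Module K E] [AddCommGroup F] [Module K F]
  {A : E →ₗ[K] F} {W : Submodule K E} {v : F}

theorem LinearMap.injective_sub_smul_of_disjoint (hW : Disjoint (ker A) W) (hv : v ≠ 0)
    (hrange : Disjoint (range A) (K ∙ v)) :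
    Function.Injective (fun p : W × K => A p.1 - p.2 • v) := by
  let f : W × K →ₗ[K] F := A ∘ₗ W.subtype ∘ₗ fst K W K - toSpanSingleton K F v ∘ₗ snd K W K
  change Function.Injective f
  refine injective_iff_map_eq_zero f |>.mpr fun ⟨w, t⟩ h => ?_
  have hAw : A w = t • v := sub_eq_zero.mp h
  have hAw₀ : A w = 0 := disjoint_def.mp hrange _ (mem_range_self A w)
    (hAw ▸ smul_mem _ t (mem_span_singleton_self v))
  have ht : t = 0 := (smul_eq_zero.mp (hAw ▸ hAw₀)).resolve_right hv
  have hw : (w : E) = 0 := disjoint_def.mp hW _ hAw₀ w.2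
  exact Prod.ext (coe_eq_zero.mp hw) ht

theorem LinearMap.surjective_sub_smul_of_codisjoint (hW : Codisjoint (ker A) W)
    (hrange : Codisjoint (range A) (K ∙ v)) :
    Function.Surjective (fun p : W × K => A p.1 - p.2 • v) := by
  intro y
  obtain ⟨_, ⟨u, rfl⟩, _, hb, rfl⟩ := mem_sup.mp (hrange.eq_top ▸ mem_top : y ∈ range A ⊔ (K ∙ v))
  obtain ⟨t, rfl⟩ := mem_span_singleton.mp hb
  obtain ⟨k, hk, w, hw, rfl⟩ := mem_sup.mp (hW.eq_top ▸ mem_top : u ∈ ker A ⊔ W)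
  refine ⟨(⟨w, hw⟩, -t), ?_⟩
  simp [mem_ker.mp hk]

theorem LinearMap.bijective_sub_smul_of_isCompl (hW : IsCompl (ker A) W) (hv : v ≠ 0)
    (hrange : IsCompl (range A) (K ∙ v)) :
    Function.Bijective (fun p : W × K => A p.1 - p.2 • v) :=
  ⟨injective_sub_smul_of_disjoint hW.disjoint hv hrange.disjoint,
    surjective_sub_smul_of_codisjoint hW.codisjoint hrange.codisjoint⟩

end

theorem stmt_3_general {G H : Type*}
    [NormedAddCommGroup G] [InnerProductSpace ℝ G]
    [NormedAddCommGroup H] [InnerProductSpace ℝ H]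
    (L C : G →L[ℝ] H) (x : G)
    (A : G →L[ℝ] H)
    (hker : LinearMap.ker (A : G →ₗ[ℝ] H) = Submodule.span ℝ {x})
    (hCx : C x ≠ 0)
    (hcompl : IsCompl (LinearMap.range (A : G →ₗ[ℝ] H)) (Submodule.span ℝ {C x})) :
    Function.Bijective
      (fun p : (Submodule.span ℝ {x})ᗮ × ℝ => A (p.1 : G) - p.2 • C x) :=
  (A : G →ₗ[ℝ] H).bijective_sub_smul_of_isCompl
    (hker ▸ (ℝ ∙ x).isCompl_orthogonal) hCx hcompl

/-- If `(x*, 0, λ*)` is a simple trivial solution, then the differential of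
`Ψ(x, λ) = L x - λ C x` at `(x*, λ*)`, namely `(ẋ, λ̇) ↦ (L - λ* C) ẋ - λ̇ • C x*`
on `(ℝ x*)ᗮ × ℝ`, is a bijection onto `H`. -/
theorem stmt_3 {G H : Type*}
    [NormedAddCommGroup G] [InnerProductSpace ℝ G] [CompleteSpace G]
    [NormedAddCommGroup H] [InnerProductSpace ℝ H] [CompleteSpace H]
    (L C : G →L[ℝ] H) (lam : ℝ) (x : G) (hx : ‖x‖ = 1)
    (A : G →L[ℝ] H) (hA : A = L - lam • C)
    (hker : LinearMap.ker (A : G →ₗ[ℝ] H) = Submodule.span ℝ {x})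
    (hCx : C x ≠ 0)
    (hcompl : IsCompl (LinearMap.range (A : G →ₗ[ℝ] H)) (Submodule.span ℝ {C x})) :
    Function.Bijective
      (fun p : (Submodule.span ℝ {x})ᗮ × ℝ => A (p.1 : G) - p.2 • C x) :=
  stmt_3_general L C x A hker hCx hcompl
end

section
/- Let G, H be real Hilbert spaces, L : G → H a bounded linear operator which is proper on bounded closed subsets of G, C : G → H a compact linear operator, and N : S → H a compact continuous map on the unit sphere S of G. Then the map Φ : S × ℝ × ℝ → H defined by Φ(x, ε, λ) = L x + ε N(x) - λ C x is proper on bounded closed subsets of S × ℝ × ℝ; that is, for every compact K ⊆ H and every bounded closed D ⊆ S × ℝ × ℝ, the set D ∩ Φ⁻¹(K) is compact. -/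
open Bornology

/-- If `L` is proper on bounded closed sets, `C` is a compact linear operator and `N` is a
compact continuous map on the unit sphere, then `Φ(x, ε, λ) = L x + ε N(x) - λ C x` is proper
on bounded closed subsets of `S × ℝ × ℝ`. -/
theorem stmt_5 {G H : Type*}
    [NormedAddCommGroup G] [InnerProductSpace ℝ G] [CompleteSpace G]
    [NormedAddCommGroup H] [InnerProductSpace ℝ H] [CompleteSpace H]
    (L C : G →L[ℝ] H)
    (hL : ∀ K : Set H, IsCompact K → ∀ D : Set G, IsBounded D → IsClosed D →
      IsCompact (D ∩ L ⁻¹' K))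
    (hC : ∀ B : Set G, IsBounded B → IsCompact (closure (C '' B)))
    (N : Metric.sphere (0 : G) 1 → H)
    (hNcont : Continuous N)
    (hNcpt : IsCompact (closure (Set.range N)))
    (Φ : Metric.sphere (0 : G) 1 × ℝ × ℝ → H)
    (hΦ : ∀ p : Metric.sphere (0 : G) 1 × ℝ × ℝ,
      Φ p = L (p.1 : G) + p.2.1 • N p.1 - p.2.2 • C (p.1 : G)) :
    ∀ K : Set H, IsCompact K →
      ∀ D : Set (Metric.sphere (0 : G) 1 × ℝ × ℝ), IsBounded D → IsClosed D →
        IsCompact (D ∩ Φ ⁻¹' K) := by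
  intro K hK D hDb hDc
  -- bound for the real parameters
  have hb1 : IsBounded ((fun p : Metric.sphere (0 : G) 1 × ℝ × ℝ => p.2.1) '' D) :=
    (LipschitzWith.prod_fst.comp LipschitzWith.prod_snd).isBounded_image hDb
  have hb2 : IsBounded ((fun p : Metric.sphere (0 : G) 1 × ℝ × ℝ => p.2.2) '' D) :=
    (LipschitzWith.prod_snd.comp LipschitzWith.prod_snd).isBounded_image hDb
  obtain ⟨R1, hR1⟩ := (Metric.isBounded_iff_subset_closedBall 0).1 hb1
  obtain ⟨R2, hR2⟩ := (Metric.isBounded_iff_subset_closedBall 0).1 hb2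
  set R := max R1 R2 with hRdef
  have hRbd : ∀ p ∈ D, |p.2.1| ≤ R ∧ |p.2.2| ≤ R := by
    intro p hp
    have h1 := hR1 (Set.mem_image_of_mem _ hp)
    have h2 := hR2 (Set.mem_image_of_mem _ hp)
    simp only [Metric.mem_closedBall, Real.dist_eq, sub_zero] at h1 h2
    exact ⟨le_trans h1 (le_max_left _ _), le_trans h2 (le_max_right _ _)⟩
  -- compact sets in H
  set T₁ : Set H := (fun q : ℝ × H => q.1 • q.2) '' (Set.Icc (-R) R ×ˢ closure (Set.range N))
  have hT₁ : IsCompact T₁ :=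
    (isCompact_Icc.prod hNcpt).image (continuous_fst.smul continuous_snd)
  have hsphB : IsBounded (Metric.sphere (0 : G) 1) := Metric.isBounded_sphere
  set T₂ : Set H := (fun q : ℝ × H => q.1 • q.2) ''
    (Set.Icc (-R) R ×ˢ closure (C '' Metric.sphere (0 : G) 1))
  have hT₂ : IsCompact T₂ :=
    (isCompact_Icc.prod (hC _ hsphB)).image (continuous_fst.smul continuous_snd)
  set K₂ : Set H := (fun q : H × H × H => q.1 - q.2.1 + q.2.2) '' (K ×ˢ T₁ ×ˢ T₂)
  have hK₂ : IsCompact K₂ :=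
    (hK.prod (hT₁.prod hT₂)).image
      ((continuous_fst.sub (continuous_fst.comp continuous_snd)).add
        (continuous_snd.comp continuous_snd))
  -- compact set in G
  have hS₀ : IsCompact (Metric.sphere (0 : G) 1 ∩ L ⁻¹' K₂) :=
    hL K₂ hK₂ _ hsphB Metric.isClosed_sphere
  have hval : Topology.IsClosedEmbedding ((↑) : Metric.sphere (0 : G) 1 → G) :=
    Metric.isClosed_sphere.isClosedEmbedding_subtypeVal
  have hpre : IsCompact (((↑) : Metric.sphere (0 : G) 1 → G) ⁻¹'
      (Metric.sphere (0 : G) 1 ∩ L ⁻¹' K₂)) :=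
    hval.isCompact_preimage hS₀
  -- the compact superset
  have hsub : D ∩ Φ ⁻¹' K ⊆
      (((↑) : Metric.sphere (0 : G) 1 → G) ⁻¹' (Metric.sphere (0 : G) 1 ∩ L ⁻¹' K₂)) ×ˢ
        (Set.Icc (-R) R ×ˢ Set.Icc (-R) R) := by
    rintro ⟨x, ε, lam⟩ ⟨hpD, hpK⟩
    obtain ⟨hε, hlam⟩ := hRbd _ hpD
    have hεI : ε ∈ Set.Icc (-R) R := abs_le.1 hε
    have hlamI : lam ∈ Set.Icc (-R) R := abs_le.1 hlam
    refine ⟨⟨x.2, ?_⟩, hεI, hlamI⟩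
    have hΦp := hΦ (x, ε, lam)
    simp only [Set.mem_preimage] at hpK
    have hLx : L (x : G) = Φ (x, ε, lam) - ε • N x + lam • C (x : G) := by
      rw [hΦp]; abel
    refine ⟨(Φ (x, ε, lam), ε • N x, lam • C (x : G)), ⟨hpK, ?_, ?_⟩, hLx.symm⟩
    · exact ⟨(ε, N x), ⟨hεI, subset_closure (Set.mem_range_self x)⟩, rfl⟩
    · exact ⟨(lam, C (x : G)), ⟨hlamI, subset_closure ⟨(x : G), x.2, rfl⟩⟩, rfl⟩
  have hΦcont : Continuous Φ := by
    have : Φ = fun p : Metric.sphere (0 : G) 1 × ℝ × ℝ =>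
        L (p.1 : G) + p.2.1 • N p.1 - p.2.2 • C (p.1 : G) := funext hΦ
    rw [this]
    fun_prop
  have hclosed : IsClosed (D ∩ Φ ⁻¹' K) :=
    hDc.inter (hK.isClosed.preimage hΦcont)
  exact (hpre.prod (isCompact_Icc.prod isCompact_Icc)).of_isClosed_subset hclosed hsub
end

section
/- For every θ ∈ ℝ, the vector x(θ) = (cos(θ/2), sin(θ/2)) is a unit vector satisfying the system x₁ + ε x₂ = λ x₁, −x₂ − ε x₁ = λ x₂ with (ε, λ) = (−sin θ, cos θ). Consequently the map θ ↦ ((cos(θ/2), sin(θ/2)), −sin θ, cos θ) parametrizes a connected closed curve of solutions containing all four trivial solutions (±(1,0), 0, 1) and (±(0,1), 0, −1). -/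
open Real

/-- For every `θ`, the unit vector `(cos(θ/2), sin(θ/2))` solves the system
`x₁ + ε x₂ = λ x₁`, `−x₂ − ε x₁ = λ x₂` with `(ε, λ) = (−sin θ, cos θ)`; the curve
`θ ↦ ((cos(θ/2), sin(θ/2)), −sin θ, cos θ)` is a connected closed set of solutions
containing the four trivial solutions `(±(1,0), 0, 1)` and `(±(0,1), 0, −1)`. -/
theorem stmt_9 (γ : ℝ → (ℝ × ℝ) × ℝ × ℝ)
    (hγ : ∀ θ : ℝ, γ θ = ((cos (θ / 2), sin (θ / 2)), -sin θ, cos θ)) :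
    (∀ θ : ℝ,
      (cos (θ / 2)) ^ 2 + (sin (θ / 2)) ^ 2 = 1 ∧
      cos (θ / 2) + (-sin θ) * sin (θ / 2) = cos θ * cos (θ / 2) ∧
      -sin (θ / 2) - (-sin θ) * cos (θ / 2) = cos θ * sin (θ / 2)) ∧
    IsConnected (Set.range γ) ∧ IsClosed (Set.range γ) ∧
    (((1, 0), 0, 1) : (ℝ × ℝ) × ℝ × ℝ) ∈ Set.range γ ∧
    (((-1, 0), 0, 1) : (ℝ × ℝ) × ℝ × ℝ) ∈ Set.range γ ∧
    (((0, 1), 0, -1) : (ℝ × ℝ) × ℝ × ℝ) ∈ Set.range γ ∧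
    (((0, -1), 0, -1) : (ℝ × ℝ) × ℝ × ℝ) ∈ Set.range γ := by
  have hcont : Continuous γ := by
    have : γ = fun θ => ((cos (θ / 2), sin (θ / 2)), -sin θ, cos θ) := funext hγ
    rw [this]; fun_prop
  have hper : ∀ θ : ℝ, γ (θ + 4 * π) = γ θ := by
    intro θ
    rw [hγ, hγ]
    have h1 : (θ + 4 * π) / 2 = θ / 2 + 2 * π := by ring
    have h2 : θ + 4 * π = θ + 2 * π + 2 * π := by ring
    rw [h1, h2, Real.cos_add_two_pi, Real.sin_add_two_pi, Real.cos_add_two_pi,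
      Real.sin_add_two_pi, Real.cos_add_two_pi, Real.sin_add_two_pi]
  have hrange : Set.range γ = γ '' Set.Icc 0 (4 * π) := by
    apply Set.Subset.antisymm
    · rintro _ ⟨θ, rfl⟩
      have hpos : 0 < 4 * π := by positivity
      obtain ⟨n, hn⟩ := Function.Periodic.exists_mem_Ico₀ (f := γ) hper hpos θ
      exact ⟨n, Set.Ico_subset_Icc_self hn.1, hn.2.symm⟩
    · exact Set.image_subset_range _ _
  refine ⟨?_, ?_, ?_, ⟨0, ?_⟩, ⟨2 * π, ?_⟩, ⟨π, ?_⟩, ⟨3 * π, ?_⟩⟩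
  · intro θ
    refine ⟨by rw [add_comm]; exact sin_sq_add_cos_sq _, ?_, ?_⟩
    · have := Real.cos_sub θ (θ / 2)
      rw [show θ - θ / 2 = θ / 2 by ring] at this
      linarith
    · have := Real.sin_sub θ (θ / 2)
      rw [show θ - θ / 2 = θ / 2 by ring] at this
      linarith
  · refine ⟨⟨γ 0, Set.mem_range_self 0⟩, ?_⟩
    exact (isConnected_range hcont).isPreconnected
  · rw [hrange]
    exact (isCompact_Icc.image hcont).isClosed
  · rw [hγ]; norm_num
  · rw [hγ]
    norm_num [Real.cos_two_pi, Real.sin_two_pi, Real.cos_pi, Real.sin_pi]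
  · rw [hγ]
    norm_num [Real.cos_pi_div_two, Real.sin_pi_div_two, Real.cos_pi, Real.sin_pi]
  · rw [hγ]
    have h1 : (3 : ℝ) * π / 2 = π / 2 + π := by ring
    have h2 : (3 : ℝ) * π = π + 2 * π := by ring
    rw [h1, h2, Real.cos_add_two_pi, Real.sin_add_two_pi, Real.cos_add_pi, Real.sin_add_pi]
    norm_num
end

section
/- Let E, F, G be Banach spaces, and let S : E → F and T : F → G be bounded linear Fredholm operators. Then the composition T ∘ S is Fredholm with ind(T ∘ S) = ind T + ind S. -/
/-!
Additivity of the index is pure linear algebra: the six-term exact sequence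
`0 → ker S → ker (T ∘ S) → ker T → coker S → coker (T ∘ S) → coker T → 0`
has vanishing Euler characteristic.

A range of finite codimension between Banach spaces is closed. If `M` is an algebraic complement
of `range u`, it is finite-dimensional, so `(x, m) ↦ u x + m` is a continuous linear
surjection `X × M → Y` between Banach spaces, hence a quotient map by the open mapping theorem;
the preimage of `range u` under it is the closed set `X × {0}`.
-/

open Module

theorem ContinuousLinearMap.isClosed_range_of_finiteDimensional_quotient
    {𝕜 X Y : Type*} [NontriviallyNormedField 𝕜] [CompleteSpace 𝕜]
    [NormedAddCommGroup X] [NormedSpace 𝕜 X] [CompleteSpace X]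
    [NormedAddCommGroup Y] [NormedSpace 𝕜 Y] [CompleteSpace Y]
    (u : X →L[𝕜] Y) [FiniteDimensional 𝕜 (Y ⧸ LinearMap.range (u : X →ₗ[𝕜] Y))] :
    IsClosed (LinearMap.range (u : X →ₗ[𝕜] Y) : Set Y) := by
  obtain ⟨M, hM⟩ := Submodule.exists_isCompl (LinearMap.range (u : X →ₗ[𝕜] Y))
  have : FiniteDimensional 𝕜 M := (Submodule.quotientEquivOfIsCompl _ M hM).finiteDimensional
  have : CompleteSpace M := FiniteDimensional.complete 𝕜 M
  let w : X × M →L[𝕜] Y := u.coprod M.subtypeL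
  have hw : Function.Surjective w :=
    LinearMap.range_eq_top.mp (by simpa [w, LinearMap.range_coprod] using hM.sup_eq_top)
  have hpre : w ⁻¹' LinearMap.range (u : X →ₗ[𝕜] Y) = Prod.snd ⁻¹' {0} := by
    ext ⟨x, m⟩
    simp only [Set.mem_preimage, SetLike.mem_coe, Set.mem_singleton_iff, w, coprod_apply,
      Submodule.subtypeL_apply]
    have hx : u x ∈ LinearMap.range (u : X →ₗ[𝕜] Y) := ⟨x, rfl⟩
    rw [Submodule.add_mem_iff_right _ hx]
    exact ⟨fun hm => Subtype.ext (Submodule.disjoint_def.mp hM.disjoint _ hm m.2),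
      fun hm => hm ▸ zero_mem _⟩
  rw [← ((w.isOpenMap hw).isQuotientMap w.continuous hw).isClosed_preimage, hpre]
  exact isClosed_singleton.preimage continuous_snd

theorem stmt_17_general {E F G : Type*}
    [NormedAddCommGroup E] [NormedSpace ℝ E] [CompleteSpace E]
    [NormedAddCommGroup F] [NormedSpace ℝ F]
    [NormedAddCommGroup G] [NormedSpace ℝ G] [CompleteSpace G]
    (S : E →L[ℝ] F) (T : F →L[ℝ] G)
    (hSker : FiniteDimensional ℝ (LinearMap.ker (S : E →ₗ[ℝ] F)))
    (hScoker : FiniteDimensional ℝ (F ⧸ LinearMap.range (S : E →ₗ[ℝ] F)))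
    (hTker : FiniteDimensional ℝ (LinearMap.ker (T : F →ₗ[ℝ] G)))
    (hTcoker : FiniteDimensional ℝ (G ⧸ LinearMap.range (T : F →ₗ[ℝ] G))) :
    FiniteDimensional ℝ (LinearMap.ker (T.comp S : E →ₗ[ℝ] G)) ∧
    IsClosed (LinearMap.range (T.comp S : E →ₗ[ℝ] G) : Set G) ∧
    FiniteDimensional ℝ (G ⧸ LinearMap.range (T.comp S : E →ₗ[ℝ] G)) ∧
    (finrank ℝ (LinearMap.ker (T.comp S : E →ₗ[ℝ] G)) : ℤ) - finrank ℝ (G ⧸ LinearMap.range (T.comp S : E →ₗ[ℝ] G))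
      = ((finrank ℝ (LinearMap.ker (T : F →ₗ[ℝ] G)) : ℤ) - finrank ℝ (G ⧸ LinearMap.range (T : F →ₗ[ℝ] G)))
        + ((finrank ℝ (LinearMap.ker (S : E →ₗ[ℝ] F)) : ℤ) - finrank ℝ (F ⧸ LinearMap.range (S : E →ₗ[ℝ] F))) := by
  have hker : FiniteDimensional ℝ (LinearMap.ker (T.comp S : E →ₗ[ℝ] G)) := by
    rw [ContinuousLinearMap.toLinearMap_comp, LinearMap.ker_comp]
    infer_instance
  have hcoker : FiniteDimensional ℝ (G ⧸ LinearMap.range (T.comp S : E →ₗ[ℝ] G)) := by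
    rw [ContinuousLinearMap.toLinearMap_comp, LinearMap.range_comp]
    infer_instance
  exact ⟨hker, (T.comp S).isClosed_range_of_finiteDimensional_quotient, hcoker,
    LinearMap.index_comp (f := (S : E →ₗ[ℝ] F)) (T : F →ₗ[ℝ] G)⟩

/-- The composition of two bounded linear Fredholm operators between Banach spaces is
Fredholm, with index the sum of the indices. -/
theorem stmt_17 {E F G : Type*}
    [NormedAddCommGroup E] [NormedSpace ℝ E] [CompleteSpace E]
    [NormedAddCommGroup F] [NormedSpace ℝ F] [CompleteSpace F]
    [NormedAddCommGroup G] [NormedSpace ℝ G] [CompleteSpace G]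
    (S : E →L[ℝ] F) (T : F →L[ℝ] G)
    (hSker : FiniteDimensional ℝ (LinearMap.ker (S : E →ₗ[ℝ] F)))
    (hSrange : IsClosed (LinearMap.range (S : E →ₗ[ℝ] F) : Set F))
    (hScoker : FiniteDimensional ℝ (F ⧸ LinearMap.range (S : E →ₗ[ℝ] F)))
    (hTker : FiniteDimensional ℝ (LinearMap.ker (T : F →ₗ[ℝ] G)))
    (hTrange : IsClosed (LinearMap.range (T : F →ₗ[ℝ] G) : Set G))
    (hTcoker : FiniteDimensional ℝ (G ⧸ LinearMap.range (T : F →ₗ[ℝ] G))) :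
    FiniteDimensional ℝ (LinearMap.ker (T.comp S : E →ₗ[ℝ] G)) ∧
    IsClosed (LinearMap.range (T.comp S : E →ₗ[ℝ] G) : Set G) ∧
    FiniteDimensional ℝ (G ⧸ LinearMap.range (T.comp S : E →ₗ[ℝ] G)) ∧
    (finrank ℝ (LinearMap.ker (T.comp S : E →ₗ[ℝ] G)) : ℤ) - finrank ℝ (G ⧸ LinearMap.range (T.comp S : E →ₗ[ℝ] G))
      = ((finrank ℝ (LinearMap.ker (T : F →ₗ[ℝ] G)) : ℤ) - finrank ℝ (G ⧸ LinearMap.range (T : F →ₗ[ℝ] G)))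
        + ((finrank ℝ (LinearMap.ker (S : E →ₗ[ℝ] F)) : ℤ) - finrank ℝ (F ⧸ LinearMap.range (S : E →ₗ[ℝ] F))) :=
  stmt_17_general S T hSker hScoker hTker hTcoker
end

section
/- Let Y be a locally compact metric space and Y₀ = {p*} a singleton in Y. If every compact subset of Y containing p* has nonempty boundary in Y, then Y \ {p*} contains a connected subset whose closure in Y is non-compact and contains p*. -/
/-!
Work in the one-point compactification `OnePoint Y`. A clopen set containing `p` but not `∞`
would pull back to a compact subset of `Y` with empty frontier, so `p` and `∞` are joined by a
continuum, and by Zorn's lemma by a continuum `C` irreducible between them (directed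
intersections of continua are continua). An irreducible continuum stays connected after
removing its two endpoints, and both endpoints lie in the closure of what remains. The trace
of `C \ {p, ∞}` on `Y` is the required set: its closure contains `p`, and it is not compact
because `∞` lies in the closure of `C \ {p, ∞}`.
-/

open Set Topology OnePoint

section Continua

variable {X : Type*} [TopologicalSpace X]

def IsContinuumJoining (a b : X) (C : Set X) : Prop :=
  IsCompact C ∧ IsPreconnected C ∧ a ∈ C ∧ b ∈ C

def IsSeparatedBetween (a b : X) (K : Set X) : Prop :=
  ∃ K₁ K₂, IsClosed K₁ ∧ IsClosed K₂ ∧ Disjoint K₁ K₂ ∧ K₁ ∪ K₂ = K ∧ a ∈ K₁ ∧ b ∈ K₂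

theorem IsContinuumJoining.pair_subset {a b : X} {C : Set X} (h : IsContinuumJoining a b C) :
    {a, b} ⊆ C :=
  insert_subset h.2.2.1 (singleton_subset_iff.2 h.2.2.2)

theorem isCompact_iInter [T2Space X] {ι : Type*} [Nonempty ι] {K : ι → Set X}
    (hc : ∀ i, IsCompact (K i)) : IsCompact (⋂ i, K i) :=
  (hc (Classical.arbitrary ι)).of_isClosed_subset (isClosed_iInter fun i => (hc i).isClosed)
    (iInter_subset _ _)

theorem IsPreconnected.iInter_of_directed [T2Space X] {ι : Type*} [Nonempty ι] {K : ι → Set X}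
    (hd : Directed (· ⊇ ·) K) (hc : ∀ i, IsCompact (K i)) (hK : ∀ i, IsPreconnected (K i)) :
    IsPreconnected (⋂ i, K i) := by
  have hZ : IsCompact (⋂ i, K i) := isCompact_iInter hc
  rw [isPreconnected_iff_subset_of_fully_disjoint_closed hZ.isClosed]
  intro s t hs ht hst hdisj
  obtain ⟨u, v, hu, hv, hsu, htv, huv⟩ := SeparatedNhds.of_isCompact_isCompact
    (hZ.inter_right hs) (hZ.inter_right ht) (hdisj.mono inter_subset_right inter_subset_right)
  have hZuv : ⋂ i, K i ⊆ u ∪ v := fun x hx =>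
    (hst hx).imp (fun h => hsu ⟨hx, h⟩) (fun h => htv ⟨hx, h⟩)
  obtain ⟨i, hi⟩ := exists_subset_nhds_of_isCompact hd hc fun x hx =>
    (hu.union hv).mem_nhds (hZuv hx)
  rcases (hK i).subset_or_subset hu hv huv hi with hKu | hKv
  · refine Or.inl fun x hx => (hst hx).resolve_right fun hxt => ?_
    exact huv.ne_of_mem (hKu (mem_iInter.1 hx i)) (htv ⟨hx, hxt⟩) rfl
  · refine Or.inr fun x hx => (hst hx).resolve_left fun hxs => ?_
    exact huv.ne_of_mem (hsu ⟨hx, hxs⟩) (hKv (mem_iInter.1 hx i)) rfl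

theorem IsContinuumJoining.exists_minimal_subset [T2Space X] {a b : X} {K : Set X}
    (hK : IsContinuumJoining a b K) : ∃ C ⊆ K, Minimal (IsContinuumJoining a b) C := by
  refine zorn_superset_nonempty {C | IsContinuumJoining a b C}
    (fun c hcS hchain hcne => ?_) K hK
  have : Nonempty c := hcne.coe_sort
  have hcK (C : c) : IsContinuumJoining a b C := hcS C.2
  have hdir : Directed (· ⊇ ·) fun C : c => (C : Set X) :=
    IsChain.directed (f := id) (r := fun s t : Set X => t ⊆ s) hchain.symm
  refine ⟨⋂₀ c, ?_, fun s hs => sInter_subset_of_mem hs⟩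
  rw [sInter_eq_iInter]
  exact ⟨isCompact_iInter fun C => (hcK C).1,
    .iInter_of_directed hdir (fun C => (hcK C).1) fun C => (hcK C).2.1,
    mem_iInter.2 fun C => (hcK C).2.2.1, mem_iInter.2 fun C => (hcK C).2.2.2⟩

theorem IsCompact.exists_isContinuumJoining_or_isSeparatedBetween [T2Space X] {K : Set X}
    (hK : IsCompact K) {a b : X} (ha : a ∈ K) (hb : b ∈ K) :
    (∃ C ⊆ K, IsContinuumJoining a b C) ∨ IsSeparatedBetween a b K := by
  have : CompactSpace K := isCompact_iff_compactSpace.mp hK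
  by_cases hab : (⟨b, hb⟩ : K) ∈ connectedComponent ⟨a, ha⟩
  · exact .inl ⟨_, Subtype.coe_image_subset _ _,
      isClosed_connectedComponent.isCompact.image continuous_subtype_val,
      isPreconnected_connectedComponent.image _ continuous_subtype_val.continuousOn,
      ⟨_, mem_connectedComponent, rfl⟩, ⟨_, hab, rfl⟩⟩
  · rw [connectedComponent_eq_iInter_isClopen, mem_iInter, not_forall] at hab
    obtain ⟨⟨Z, hZ, haZ⟩, hbZ⟩ := hab
    refine .inr ⟨(↑) '' Z, (↑) '' Zᶜ, ?_, ?_, ?_, ?_, ⟨_, haZ, rfl⟩, ⟨_, hbZ, rfl⟩⟩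
    · exact (hZ.isClosed.isCompact.image continuous_subtype_val).isClosed
    · exact (hZ.compl.isClosed.isCompact.image continuous_subtype_val).isClosed
    · exact (disjoint_image_iff Subtype.val_injective).mpr disjoint_compl_right
    · rw [← image_union, union_compl_self, image_univ, Subtype.range_val]

theorem not_isPreconnected_union_of_isSeparatedBetween {a b : X} {K L : Set X}
    (hKL : K ∩ L ⊆ {a, b}) (hK : IsSeparatedBetween a b K) (hL : IsSeparatedBetween a b L) :
    ¬IsPreconnected (K ∪ L) := by
  obtain ⟨K₁, K₂, hK₁, hK₂, hK₁₂, rfl, haK, hbK⟩ := hK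
  obtain ⟨L₁, L₂, hL₁, hL₂, hL₁₂, rfl, haL, hbL⟩ := hL
  have hdisj : Disjoint (K₁ ∪ L₁) (K₂ ∪ L₂) := by
    rw [disjoint_left] at hK₁₂ hL₁₂ ⊢
    rintro x (hx₁ | hx₁) (hx₂ | hx₂)
    · exact hK₁₂ hx₁ hx₂
    · rcases hKL ⟨.inl hx₁, .inr hx₂⟩ with rfl | rfl
      · exact hL₁₂ haL hx₂
      · exact hK₁₂ hx₁ hbK
    · rcases hKL ⟨.inr hx₂, .inl hx₁⟩ with rfl | rfl
      · exact hK₁₂ haK hx₂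
      · exact hL₁₂ hx₁ hbL
    · exact hL₁₂ hx₁ hx₂
  rw [isPreconnected_closed_iff]
  intro h
  obtain ⟨x, -, hx₁, hx₂⟩ := h _ _ (hK₁.union hL₁) (hK₂.union hL₂)
    (by rw [union_union_union_comm]) ⟨a, .inl (.inl haK), .inl haK⟩ ⟨b, .inl (.inr hbK), .inl hbK⟩
  exact disjoint_left.1 hdisj hx₁ hx₂

theorem Minimal.isSeparatedBetween [T2Space X] {a b : X} {C K : Set X}
    (hC : Minimal (IsContinuumJoining a b) C) (hKC : K ⊆ C) (hK : IsClosed K) (ha : a ∈ K)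
    (hb : b ∈ K) (hCK : ¬C ⊆ K) : IsSeparatedBetween a b K := by
  refine ((hC.prop.1.of_isClosed_subset hK hKC).exists_isContinuumJoining_or_isSeparatedBetween
    ha hb).resolve_left ?_
  rintro ⟨P, hPK, hP⟩
  exact hCK ((hC.eq_of_subset hP (hPK.trans hKC)).symm.subset.trans hPK)

theorem Minimal.isSeparatedBetween_union_pair [T2Space X] {a b : X} {C K : Set X}
    (hC : Minimal (IsContinuumJoining a b) C) (hK : IsClosed K) (hKC : K ⊆ C) {y : X}
    (hy : y ∈ C \ {a, b}) (hyK : y ∉ K) : IsSeparatedBetween a b (K ∪ {a, b}) :=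
  hC.isSeparatedBetween (union_subset hKC hC.prop.pair_subset)
    (hK.union (toFinite _).isClosed) (.inr (mem_insert _ _)) (.inr (mem_insert_of_mem _ rfl))
    fun hCK => hyK ((hCK hy.1).resolve_right hy.2)

/-- A splitting `C \ {a, b} = U ∪ V` yields proper subcompacta `closure U ∪ {a, b}` and
`closure V ∪ {a, b}` of `C` meeting only in `{a, b}`; by irreducibility both are separated between
`a` and `b`, and the two separations glue to one of `C`. -/
theorem Minimal.isPreconnected_diff_pair [T2Space X] {a b : X} {C : Set X}
    (hC : Minimal (IsContinuumJoining a b) C) : IsPreconnected (C \ {a, b}) := by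
  intro u v hu hv hcov ⟨x, hxs, hxu⟩ ⟨y, hys, hyv⟩
  rw [← not_disjoint_iff_nonempty_inter]
  intro huv
  set s := C \ {a, b}
  have hsC : ∀ w, closure (s ∩ w) ⊆ C := fun w =>
    closure_minimal (inter_subset_left.trans sdiff_subset) hC.prop.1.isClosed
  have hUv : Disjoint (closure (s ∩ u)) v := Disjoint.closure_left
    (disjoint_left.2 fun z hz hzv => disjoint_left.1 huv hz.1 ⟨hz.2, hzv⟩) hv
  have hVu : Disjoint (closure (s ∩ v)) u := Disjoint.closure_left
    (disjoint_left.2 fun z hz hzu => disjoint_left.1 huv hz.1 ⟨hzu, hz.2⟩) hu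
  have hKL : (closure (s ∩ u) ∪ {a, b}) ∩ (closure (s ∩ v) ∪ {a, b}) ⊆ {a, b} := by
    rintro z ⟨hzK, hzL⟩
    by_contra hz
    rcases hcov ⟨hsC u (hzK.resolve_right hz), hz⟩ with hzu | hzv
    · exact disjoint_left.1 hVu (hzL.resolve_right hz) hzu
    · exact disjoint_left.1 hUv (hzK.resolve_right hz) hzv
  have hKL_eq : (closure (s ∩ u) ∪ {a, b}) ∪ (closure (s ∩ v) ∪ {a, b}) = C := by
    refine subset_antisymm ?_ fun z hzC => ?_
    · have hab := hC.prop.pair_subset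
      exact union_subset (union_subset (hsC u) hab) (union_subset (hsC v) hab)
    · by_cases hz : z ∈ ({a, b} : Set X)
      · exact .inl (.inr hz)
      rcases hcov ⟨hzC, hz⟩ with hzu | hzv
      · exact .inl (.inl (subset_closure ⟨⟨hzC, hz⟩, hzu⟩))
      · exact .inr (.inl (subset_closure ⟨⟨hzC, hz⟩, hzv⟩))
  refine not_isPreconnected_union_of_isSeparatedBetween hKL
    (hC.isSeparatedBetween_union_pair isClosed_closure (hsC u) hys
      fun hy => disjoint_left.1 hUv hy hyv)
    (hC.isSeparatedBetween_union_pair isClosed_closure (hsC v) hxs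
      fun hx => disjoint_left.1 hVu hx hxu) ?_
  rw [hKL_eq]
  exact hC.prop.2.1

theorem IsPreconnected.mem_closure_diff_pair [T1Space X] {C : Set X} (hC : IsPreconnected C)
    {x y : X} (hx : x ∈ C) (hy : y ∈ C) (hxy : x ≠ y) : x ∈ closure (C \ {x, y}) := by
  rw [mem_closure_iff]
  intro o ho hxo
  obtain ⟨z, hzC, ⟨hzo, hzy⟩, hzx⟩ := hC (o \ {y}) {x}ᶜ (ho.sdiff isClosed_singleton)
    isOpen_compl_singleton
    (fun w _ => (em (w = x)).imp (fun h => by subst h; exact ⟨hxo, hxy⟩) id)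
    ⟨x, hx, hxo, hxy⟩ ⟨y, hy, hxy.symm⟩
  exact ⟨z, hzo, hzC, by rintro (rfl | rfl) <;> contradiction⟩

end Continua

namespace OnePoint

theorem image_coe_preimage_coe {X : Type*} {s : Set (OnePoint X)} (hs : ∞ ∉ s) :
    (↑) '' ((↑) ⁻¹' s : Set X) = s :=
  image_preimage_eq_of_subset (compl_infty (X := X) ▸ subset_compl_singleton_iff.2 hs)

variable {X : Type*} [TopologicalSpace X]

theorem exists_isContinuumJoining_infty [LocallyCompactSpace X] [T2Space X] (x : X)
    (h : ∀ K : Set X, IsCompact K → x ∈ K → (frontier K).Nonempty) :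
    ∃ C, IsContinuumJoining (x : OnePoint X) ∞ C := by
  refine (isCompact_univ.exists_isContinuumJoining_or_isSeparatedBetween (mem_univ _)
    (mem_univ _)).elim (fun ⟨C, _, hC⟩ => ⟨C, hC⟩)
    fun ⟨Z, Z', hZ, hZ', hZZ', hcov, hxZ, hinfZ'⟩ => ?_
  have hZ_eq : Z = Z'ᶜ := IsCompl.eq_compl ⟨hZZ', codisjoint_iff.2 hcov⟩
  obtain ⟨hK, hKc⟩ := (isClosed_iff_of_notMem (disjoint_left.1 hZZ' · hinfZ')).1 hZ
  have hK_clopen : IsClopen ((↑) ⁻¹' Z : Set X) :=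
    ⟨hK, hZ_eq ▸ (hZ'.preimage continuous_coe).isOpen_compl⟩
  obtain ⟨y, hy⟩ := h _ hKc hxZ
  rw [hK_clopen.frontier_eq] at hy
  exact absurd hy (notMem_empty y)

theorem isPreconnected_preimage_coe {s : Set (OnePoint X)} (hs : ∞ ∉ s) :
    IsPreconnected ((↑) ⁻¹' s : Set X) ↔ IsPreconnected s := by
  rw [← isOpenEmbedding_coe.isInducing.isPreconnected_image, image_coe_preimage_coe hs]

theorem not_isCompact_closure_preimage_coe {s : Set (OnePoint X)} (hs : ∞ ∉ s)
    (h : ∞ ∈ closure s) : ¬IsCompact (closure ((↑) ⁻¹' s : Set X)) := fun hc =>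
  infty_notMem_image_coe <| closure_minimal
    ((image_coe_preimage_coe hs).symm.subset.trans (image_mono subset_closure))
    (isClosed_image_coe.2 ⟨isClosed_closure, hc⟩) h

end OnePoint

/-- Whyburn-type lemma for a singleton: if `Y` is a locally compact metric space, `p* ∈ Y`,
and every compact subset of `Y` containing `p*` has nonempty boundary in `Y`, then
`Y \ {p*}` contains a connected subset whose closure in `Y` is non-compact and contains `p*`. -/
theorem stmt_19 {Y : Type*} [MetricSpace Y] [LocallyCompactSpace Y] (p : Y)
    (h : ∀ K : Set Y, IsCompact K → p ∈ K → (frontier K).Nonempty) :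
    ∃ D : Set Y, D ⊆ {p}ᶜ ∧ IsConnected D ∧
      ¬ IsCompact (closure D) ∧ p ∈ closure D := by
  obtain ⟨K, hK⟩ := OnePoint.exists_isContinuumJoining_infty p h
  obtain ⟨C, -, hC⟩ := hK.exists_minimal_subset
  obtain ⟨-, hCconn, hpC, hinfC⟩ := hC.prop
  have hpinf : (p : OnePoint Y) ≠ ∞ := coe_ne_infty p
  have hinf : ∞ ∉ C \ {(p : OnePoint Y), ∞} := fun h => h.2 (.inr rfl)
  have hp_mem : p ∈ closure ((↑) ⁻¹' (C \ {(p : OnePoint Y), ∞})) := by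
    rw [← isOpenMap_coe.preimage_closure_eq_closure_preimage continuous_coe]
    exact hCconn.mem_closure_diff_pair hpC hinfC hpinf
  refine ⟨_, fun y hy hyp => hy.2 (.inl (congrArg _ hyp)), ⟨closure_nonempty_iff.1 ⟨p, hp_mem⟩,
    (isPreconnected_preimage_coe hinf).2 hC.isPreconnected_diff_pair⟩,
    not_isCompact_closure_preimage_coe hinf ?_, hp_mem⟩
  rw [pair_comm]
  exact hCconn.mem_closure_diff_pair hinfC hpC hpinf.symm
end
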